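/- arXiv:1410.1101 — 2 statements merged into one kernel-verified Lean document; each statement's English description precedes it below -/
import Mathlib

section
/- Optimality of the backward kernel in SMC samplers: with importance path density q̃_t(x_{1:t}) = q₁(x₁)∏ⱼ Kⱼ(x_{j−1},xⱼ), marginal q_t(x_t) = ∫ q̃_t dx_{1:t−1}, and backward kernels L_s^{opt}(x_{s+1},x_s) = q_s(x_s)K_{s+1}(x_s,x_{s+1})/q_{s+1}(x_{s+1}), the resulting path importance weight w_t^{opt}(x_{1:t}) = f_t(x_t)∏_s L_s^{opt}(x_{s+1},x_s) / q̃_t(x_{1:t}) equals f_t(x_t)/q_t(x_t), and its variance under q̃_t is no larger than that of the weight obtained with any other choice of backward kernels. -/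
/-!
Integrating a Markov path density over all coordinates but the last is a forward recursion along
the chain: for the importance path density `q̃` it yields the marginal `q_t`, and for a product of
normalized backward kernels it yields `1`. Hence on each fibre `x_t = y` every path weight `w`
satisfies `∫ w q̃ = f_t(y)`, so all weights have the same mean, while Cauchy–Schwarz on the fibre
gives `f_t(y)² / q_t(y) ≤ ∫ w² q̃`, the left side being the fibre second moment of `f_t / q_t`.
The optimal weight reduces to `f_t / q_t` because the ratios `q_s / q_{s+1}` telescope.
-/

open MeasureTheory
open scoped ENNReal

theorem ENNReal.sq_lintegral_mul_le {α : Type*} [MeasurableSpace α] {μ : Measure α}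
    {g q : α → ℝ≥0∞} (hg : AEMeasurable g μ) (hq : AEMeasurable q μ) :
    (∫⁻ a, g a * q a ∂μ) ^ 2 ≤ (∫⁻ a, g a ^ 2 * q a ∂μ) * ∫⁻ a, q a ∂μ := by
  have half : ((2 : ℕ) : ℝ)⁻¹ + ((2 : ℕ) : ℝ)⁻¹ = 1 := by norm_num
  have hroot : ∀ a, (g a ^ 2 * q a) ^ ((2 : ℕ) : ℝ)⁻¹ * q a ^ ((2 : ℕ) : ℝ)⁻¹ = g a * q a := by
    intro a
    rw [ENNReal.mul_rpow_of_nonneg _ _ (by positivity), ENNReal.pow_rpow_inv_natCast two_ne_zero,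
      mul_assoc, ← ENNReal.rpow_add_of_nonneg _ _ (by positivity) (by positivity), half,
      ENNReal.rpow_one]
  have holder := ENNReal.lintegral_mul_norm_pow_le (f := fun a => g a ^ 2 * q a)
    ((hg.pow_const 2).mul hq) hq (by positivity) (by positivity) half
  simp only [hroot] at holder
  calc (∫⁻ a, g a * q a ∂μ) ^ 2
      ≤ ((∫⁻ a, g a ^ 2 * q a ∂μ) ^ ((2 : ℕ) : ℝ)⁻¹ * (∫⁻ a, q a ∂μ) ^ ((2 : ℕ) : ℝ)⁻¹) ^ 2 :=
        pow_le_pow_left₀ zero_le holder 2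
    _ = (∫⁻ a, g a ^ 2 * q a ∂μ) * ∫⁻ a, q a ∂μ := by
        rw [mul_pow, ENNReal.rpow_inv_natCast_pow two_ne_zero,
          ENNReal.rpow_inv_natCast_pow two_ne_zero]

section FinSnoc

variable {E : Type*} [MeasurableSpace E] {n : ℕ}

theorem MeasurableEquiv.piFinSuccAbove_last_symm_apply (p : E × (Fin n → E)) :
    (MeasurableEquiv.piFinSuccAbove (fun _ => E) (Fin.last n)).symm p = Fin.snoc p.2 p.1 := by
  simp [MeasurableEquiv.piFinSuccAbove, Fin.snocEquiv]

theorem measurable_fin_snoc_prod :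
    Measurable fun p : E × (Fin n → E) => (Fin.snoc p.2 p.1 : Fin (n + 1) → E) := by
  convert (MeasurableEquiv.piFinSuccAbove (fun _ => E) (Fin.last n)).symm.measurable using 1
  exact funext fun p => (MeasurableEquiv.piFinSuccAbove_last_symm_apply p).symm

theorem measurable_fin_snoc (y : E) :
    Measurable fun z : Fin n → E => (Fin.snoc z y : Fin (n + 1) → E) :=
  measurable_fin_snoc_prod.comp (measurable_const.prodMk measurable_id)

theorem lintegral_pi_fin_succ_eq_lintegral_snoc (ν : Measure E) [SigmaFinite ν]
    {F : (Fin (n + 1) → E) → ℝ≥0∞} (hF : Measurable F) :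
    ∫⁻ x, F x ∂Measure.pi (fun _ => ν)
      = ∫⁻ y, ∫⁻ z, F (Fin.snoc z y) ∂Measure.pi (fun _ => ν) ∂ν := by
  rw [← (measurePreserving_piFinSuccAbove (fun _ => ν) (Fin.last n)).symm.lintegral_comp hF]
  simp only [MeasurableEquiv.piFinSuccAbove_last_symm_apply]
  exact lintegral_prod _ (hF.comp measurable_fin_snoc_prod).aemeasurable

end FinSnoc

section PathDensity

variable {E M : Type*}

def pathDensity [CommMonoid M] {n : ℕ} (init : E → M) (P : ℕ → E → E → M)
    (x : Fin (n + 1) → E) : M :=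
  init (x 0) * ∏ j : Fin n, P j (x j.castSucc) (x j.succ)

theorem pathDensity_snoc [CommMonoid M] {n : ℕ} (init : E → M) (P : ℕ → E → E → M)
    (x : Fin (n + 1) → E) (y : E) :
    pathDensity init P (Fin.snoc x y : Fin (n + 2) → E)
      = pathDensity init P x * P n (x (Fin.last n)) y := by
  simp only [pathDensity, Fin.prod_univ_castSucc, mul_assoc]
  rw [← Fin.castSucc_zero, Fin.snoc_castSucc, Fin.succ_last, Fin.snoc_castSucc, Fin.snoc_last,
    Fin.val_last]
  simp only [Fin.succ_castSucc, Fin.snoc_castSucc, Fin.val_castSucc]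

theorem ofReal_pathDensity {n : ℕ} {init : E → ℝ} {P : ℕ → E → E → ℝ} (hinit : ∀ a, 0 ≤ init a)
    (hP : ∀ j a b, 0 ≤ P j a b) (x : Fin (n + 1) → E) :
    ENNReal.ofReal (pathDensity init P x)
      = pathDensity (fun a => ENNReal.ofReal (init a))
          (fun j a b => ENNReal.ofReal (P j a b)) x := by
  rw [pathDensity, ENNReal.ofReal_mul (hinit _), ENNReal.ofReal_prod_of_nonneg fun j _ => hP _ _ _]
  rfl

theorem pathDensity_nonneg {n : ℕ} {init : E → ℝ} {P : ℕ → E → E → ℝ} (hinit : ∀ a, 0 ≤ init a)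
    (hP : ∀ j a b, 0 ≤ P j a b) (x : Fin (n + 1) → E) : 0 ≤ pathDensity init P x :=
  mul_nonneg (hinit _) (Finset.prod_nonneg fun _ _ => hP _ _ _)

theorem pathDensity_pos {n : ℕ} {init : E → ℝ} {P : ℕ → E → E → ℝ} (hinit : ∀ a, 0 < init a)
    (hP : ∀ j a b, 0 < P j a b) (x : Fin (n + 1) → E) : 0 < pathDensity init P x :=
  mul_pos (hinit _) (Finset.prod_pos fun _ _ => hP _ _ _)

variable [MeasurableSpace E]

theorem measurable_pathDensity [CommMonoid M] [MeasurableSpace M] [MeasurableMul₂ M] {n : ℕ}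
    {init : E → M} {P : ℕ → E → E → M} (hinit : Measurable init)
    (hP : ∀ j, Measurable (Function.uncurry (P j))) :
    Measurable (pathDensity init P : (Fin (n + 1) → E) → M) :=
  (hinit.comp (measurable_pi_apply 0)).mul <| Finset.measurable_prod _ fun j _ =>
    (hP j).comp (f := fun x : Fin (n + 1) → E => (x j.castSucc, x j.succ))
      ((measurable_pi_apply _).prodMk (measurable_pi_apply _))

theorem lintegral_pathDensity_snoc (ν : Measure E) [SigmaFinite ν] (R : ℕ → E → ℝ≥0∞)
    (P : ℕ → E → E → ℝ≥0∞) (hR : Measurable (R 0))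
    (hP : ∀ j, Measurable (Function.uncurry (P j)))
    (hrec : ∀ j b, ∫⁻ a, R j a * P j a b ∂ν = R (j + 1) b) (n : ℕ) (y : E) :
    ∫⁻ z, pathDensity (R 0) P (Fin.snoc z y : Fin (n + 1) → E) ∂Measure.pi (fun _ => ν)
      = R n y := by
  induction n generalizing y with
  | zero => simp [pathDensity, Fin.snoc_zero]
  | succ n ih =>
    have hmeas := measurable_pathDensity (n := n) hR hP
    calc ∫⁻ z, pathDensity (R 0) P (Fin.snoc z y : Fin (n + 2) → E) ∂Measure.pi (fun _ => ν)
        = ∫⁻ z, pathDensity (R 0) P z * P n (z (Fin.last n)) y ∂Measure.pi (fun _ => ν) := by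
          simp only [pathDensity_snoc]
      _ = ∫⁻ x, (∫⁻ z, pathDensity (R 0) P (Fin.snoc z x : Fin (n + 1) → E)
            ∂Measure.pi (fun _ => ν)) * P n x y ∂ν := by
          rw [lintegral_pi_fin_succ_eq_lintegral_snoc ν
            (F := fun z => pathDensity (R 0) P z * P n (z (Fin.last n)) y) (hmeas.mul ((hP n).comp
            (f := fun z : Fin (n + 1) → E => (z (Fin.last n), y))
            ((measurable_pi_apply _).prodMk measurable_const)))]
          refine lintegral_congr fun x => ?_
          simp only [Fin.snoc_last]
          exact lintegral_mul_const _ (hmeas.comp (measurable_fin_snoc x))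
      _ = R (n + 1) y := by simp only [ih, hrec]

variable (ν : Measure E) [SigmaFinite ν]

theorem measurable_of_integral_recursion {R : ℕ → E → ℝ} {P : ℕ → E → E → ℝ}
    (hR : Measurable (R 0)) (hP : ∀ j, Measurable (Function.uncurry (P j)))
    (hrec : ∀ j b, R (j + 1) b = ∫ a, R j a * P j a b ∂ν) (j : ℕ) : Measurable (R j) := by
  induction j with
  | zero => exact hR
  | succ j ih =>
    rw [funext (hrec j)]
    exact ((ih.comp measurable_snd).mul ((hP j).comp measurable_swap)).stronglyMeasurable
      |>.integral_prod_right'.measurable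

theorem lintegral_ofReal_pathDensity_snoc {R : ℕ → E → ℝ} {P : ℕ → E → E → ℝ}
    (hR : Measurable (R 0)) (hP : ∀ j, Measurable (Function.uncurry (P j)))
    (hR0 : ∀ j a, 0 ≤ R j a) (hP0 : ∀ j a b, 0 ≤ P j a b)
    (hint : ∀ j b, Integrable (fun a => R j a * P j a b) ν)
    (hrec : ∀ j b, R (j + 1) b = ∫ a, R j a * P j a b ∂ν) (n : ℕ) (y : E) :
    ∫⁻ z, ENNReal.ofReal (pathDensity (R 0) P (Fin.snoc z y : Fin (n + 1) → E))
      ∂Measure.pi (fun _ => ν) = ENNReal.ofReal (R n y) := by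
  simp only [ofReal_pathDensity (hR0 0) hP0]
  refine lintegral_pathDensity_snoc ν (fun j a => ENNReal.ofReal (R j a))
    (fun j a b => ENNReal.ofReal (P j a b)) hR.ennreal_ofReal
    (fun j => (hP j).ennreal_ofReal) (fun j b => ?_) n y
  rw [hrec, ofReal_integral_eq_lintegral_ofReal (hint j b)
    (ae_of_all _ fun a => mul_nonneg (hR0 _ _) (hP0 _ _ _))]
  simp only [ENNReal.ofReal_mul (hR0 _ _)]

theorem lintegral_ofReal_backward_pathDensity_snoc {L : ℕ → E → E → ℝ}
    (hL : ∀ j, Measurable (Function.uncurry (L j))) (hL0 : ∀ j b a, 0 ≤ L j b a)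
    (hLint : ∀ j b, ∫ a, L j b a ∂ν = 1) (n : ℕ) (y : E) :
    ∫⁻ z, ENNReal.ofReal (pathDensity (fun _ => 1) (fun j a b => L j b a)
      (Fin.snoc z y : Fin (n + 1) → E)) ∂Measure.pi (fun _ => ν) = 1 := by
  simpa using lintegral_ofReal_pathDensity_snoc ν (R := fun _ _ => 1)
    (P := fun j a b => L j b a) measurable_const
    (fun j => (hL j).comp measurable_swap) (fun _ _ => zero_le_one) (fun j a b => hL0 j b a)
    (fun j b => .of_integral_ne_zero (by simp [hLint])) (fun j b => by simp [hLint]) n y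

end PathDensity

theorem Fin.prod_castSucc_mul_last {M : Type*} [CommMonoid M] {n : ℕ} (g : Fin (n + 1) → M) :
    (∏ i : Fin n, g i.castSucc) * g (Fin.last n) = g 0 * ∏ i : Fin n, g i.succ := by
  rw [← Fin.prod_univ_castSucc, Fin.prod_univ_succ]

theorem optimal_backward_weight_eq {E : Type*} {n : ℕ} (q : ℕ → E → ℝ) (K : ℕ → E → E → ℝ)
    (hq : ∀ j a, q j a ≠ 0) (hK : ∀ j a b, K j a b ≠ 0) (c : ℝ) (x : Fin (n + 1) → E) :
    c * (∏ s : Fin n, q s (x s.castSucc) * K s (x s.castSucc) (x s.succ) / q (s + 1) (x s.succ))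
        / pathDensity (q 0) K x
      = c / q n (x (Fin.last n)) := by
  have telescope := Fin.prod_castSucc_mul_last fun i => q i (x i)
  simp only [Fin.val_castSucc, Fin.val_succ, Fin.val_last, Fin.val_zero] at telescope
  have hK' : ∏ s : Fin n, K s (x s.castSucc) (x s.succ) ≠ 0 :=
    Finset.prod_ne_zero_iff.2 fun _ _ => hK _ _ _
  have hq' : ∏ s : Fin n, q (s + 1) (x s.succ) ≠ 0 := Finset.prod_ne_zero_iff.2 fun _ _ => hq _ _
  rw [pathDensity, Finset.prod_div_distrib, Finset.prod_mul_distrib]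
  field_simp [hq 0 (x 0), hq n (x (Fin.last n))]
  linear_combination c * telescope

section MarginalRatio

variable {E : Type*} [MeasurableSpace E] (ν : Measure E) {n : ℕ}

variable {q w : (Fin (n + 1) → E) → ℝ} {F Q : E → ℝ}

theorem lintegral_const_mul_snoc (hq : Measurable q) {m : E → ℝ≥0∞}
    (hm : ∀ y, ∫⁻ z, ENNReal.ofReal (q (Fin.snoc z y)) ∂Measure.pi (fun _ => ν) = m y)
    {c : ℝ} (hc : 0 ≤ c) (y : E) :
    ∫⁻ z, ENNReal.ofReal (c * q (Fin.snoc z y)) ∂Measure.pi (fun _ => ν)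
      = ENNReal.ofReal c * m y := by
  simp only [ENNReal.ofReal_mul hc]
  rw [← hm]
  exact lintegral_const_mul _ (hq.comp (measurable_fin_snoc y)).ennreal_ofReal

variable [SigmaFinite ν]

theorem integral_eq_of_lintegral_snoc {g : (Fin (n + 1) → E) → ℝ} (hg : Measurable g)
    (hg0 : ∀ x, 0 ≤ g x) {F : E → ℝ}
    (hF : ∀ y, ∫⁻ z, ENNReal.ofReal (g (Fin.snoc z y)) ∂Measure.pi (fun _ => ν)
      = ENNReal.ofReal (F y)) :
    ∫ x, g x ∂Measure.pi (fun _ => ν) = (∫⁻ y, ENNReal.ofReal (F y) ∂ν).toReal := by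
  rw [integral_eq_lintegral_of_nonneg_ae (ae_of_all _ hg0) hg.aestronglyMeasurable,
    lintegral_pi_fin_succ_eq_lintegral_snoc ν hg.ennreal_ofReal]
  simp only [hF]

theorem lintegral_sq_marginal_ratio_le (hq : Measurable q) (hw : Measurable w)
    (hF : Measurable F) (hQ : Measurable Q) (hw0 : ∀ x, 0 ≤ w x)
    (hF0 : ∀ y, 0 ≤ F y) (hQ0 : ∀ y, 0 < Q y)
    (hmargq : ∀ y, ∫⁻ z, ENNReal.ofReal (q (Fin.snoc z y)) ∂Measure.pi (fun _ => ν)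
      = ENNReal.ofReal (Q y))
    (hmargw : ∀ y, ∫⁻ z, ENNReal.ofReal (w (Fin.snoc z y) * q (Fin.snoc z y))
      ∂Measure.pi (fun _ => ν) = ENNReal.ofReal (F y)) :
    ∫⁻ x, ENNReal.ofReal ((F (x (Fin.last n)) / Q (x (Fin.last n))) ^ 2 * q x)
        ∂Measure.pi (fun _ => ν)
      ≤ ∫⁻ x, ENNReal.ofReal (w x ^ 2 * q x) ∂Measure.pi (fun _ => ν) := by
  refine (lintegral_pi_fin_succ_eq_lintegral_snoc ν (by fun_prop)).trans_le <|
    (lintegral_mono fun y => ?_).trans_eq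
      (lintegral_pi_fin_succ_eq_lintegral_snoc ν (by fun_prop)).symm
  have hsnoc := measurable_fin_snoc (n := n) y
  simp only [Fin.snoc_last]
  calc ∫⁻ z, ENNReal.ofReal ((F y / Q y) ^ 2 * q (Fin.snoc z y)) ∂Measure.pi (fun _ => ν)
      = ENNReal.ofReal ((F y / Q y) ^ 2) * ENNReal.ofReal (Q y) :=
        lintegral_const_mul_snoc ν hq hmargq (sq_nonneg _) y
    _ = ENNReal.ofReal (F y) ^ 2 / ENNReal.ofReal (Q y) := by
        rw [← ENNReal.ofReal_mul (sq_nonneg _), ← ENNReal.ofReal_pow (hF0 y),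
          ← ENNReal.ofReal_div_of_pos (hQ0 y)]
        field_simp [(hQ0 y).ne']
    _ = (∫⁻ z, ENNReal.ofReal (w (Fin.snoc z y)) * ENNReal.ofReal (q (Fin.snoc z y))
            ∂Measure.pi (fun _ => ν)) ^ 2
          / ∫⁻ z, ENNReal.ofReal (q (Fin.snoc z y)) ∂Measure.pi (fun _ => ν) := by
        simp only [← ENNReal.ofReal_mul (hw0 _), hmargw, hmargq]
    _ ≤ ∫⁻ z, ENNReal.ofReal (w (Fin.snoc z y)) ^ 2 * ENNReal.ofReal (q (Fin.snoc z y))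
          ∂Measure.pi (fun _ => ν) :=
        ENNReal.div_le_of_le_mul <| ENNReal.sq_lintegral_mul_le
          (hw.comp hsnoc).ennreal_ofReal.aemeasurable (hq.comp hsnoc).ennreal_ofReal.aemeasurable
    _ = ∫⁻ z, ENNReal.ofReal (w (Fin.snoc z y) ^ 2 * q (Fin.snoc z y))
          ∂Measure.pi (fun _ => ν) := by
        simp only [ENNReal.ofReal_mul (sq_nonneg _), ENNReal.ofReal_pow (hw0 _)]

theorem variance_marginal_ratio_le (hq : Measurable q) (hw : Measurable w)
    (hF : Measurable F) (hQ : Measurable Q) (hq0 : ∀ x, 0 ≤ q x) (hw0 : ∀ x, 0 ≤ w x)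
    (hF0 : ∀ y, 0 ≤ F y) (hQ0 : ∀ y, 0 < Q y)
    (hmargq : ∀ y, ∫⁻ z, ENNReal.ofReal (q (Fin.snoc z y)) ∂Measure.pi (fun _ => ν)
      = ENNReal.ofReal (Q y))
    (hmargw : ∀ y, ∫⁻ z, ENNReal.ofReal (w (Fin.snoc z y) * q (Fin.snoc z y))
      ∂Measure.pi (fun _ => ν) = ENNReal.ofReal (F y))
    (hint : Integrable (fun x => w x ^ 2 * q x) (Measure.pi fun _ => ν)) :
    (∫ x, (F (x (Fin.last n)) / Q (x (Fin.last n))) ^ 2 * q x ∂Measure.pi (fun _ => ν)) -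
        (∫ x, F (x (Fin.last n)) / Q (x (Fin.last n)) * q x ∂Measure.pi (fun _ => ν)) ^ 2 ≤
      (∫ x, w x ^ 2 * q x ∂Measure.pi (fun _ => ν)) -
        (∫ x, w x * q x ∂Measure.pi (fun _ => ν)) ^ 2 := by
  have hlast := measurable_pi_apply (X := fun _ : Fin (n + 1) => E) (Fin.last n)
  have hratio : Measurable fun x : Fin (n + 1) → E => F (x (Fin.last n)) / Q (x (Fin.last n)) :=
    (hF.comp hlast).div (hQ.comp hlast)
  have hratio0 : ∀ y, 0 ≤ F y / Q y := fun y => div_nonneg (hF0 y) (hQ0 y).le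
  have mean_ratio : ∫ x, F (x (Fin.last n)) / Q (x (Fin.last n)) * q x ∂Measure.pi (fun _ => ν)
      = (∫⁻ y, ENNReal.ofReal (F y) ∂ν).toReal := by
    refine integral_eq_of_lintegral_snoc ν (hratio.mul hq)
      (fun x => mul_nonneg (hratio0 _) (hq0 x)) fun y => ?_
    simp only [Pi.mul_apply, Fin.snoc_last]
    rw [lintegral_const_mul_snoc ν hq hmargq (hratio0 y), ← ENNReal.ofReal_mul (hratio0 y),
      div_mul_cancel₀ _ (hQ0 y).ne']
  have mean_w : ∫ x, w x * q x ∂Measure.pi (fun _ => ν) = (∫⁻ y, ENNReal.ofReal (F y) ∂ν).toReal :=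
    integral_eq_of_lintegral_snoc ν (hw.mul hq) (fun x => mul_nonneg (hw0 x) (hq0 x)) hmargw
  have second_moment : ∫ x, (F (x (Fin.last n)) / Q (x (Fin.last n))) ^ 2 * q x
      ∂Measure.pi (fun _ => ν) ≤ ∫ x, w x ^ 2 * q x ∂Measure.pi (fun _ => ν) := by
    rw [integral_eq_lintegral_of_nonneg_ae (ae_of_all _ fun x => mul_nonneg (sq_nonneg _) (hq0 x))
        ((hratio.pow_const 2).mul hq).aestronglyMeasurable,
      integral_eq_lintegral_of_nonneg_ae (ae_of_all _ fun x => mul_nonneg (sq_nonneg _) (hq0 x))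
        ((hw.pow_const 2).mul hq).aestronglyMeasurable]
    exact ENNReal.toReal_mono hint.lintegral_lt_top.ne
      (lintegral_sq_marginal_ratio_le ν hq hw hF hQ hw0 hF0 hQ0 hmargq hmargw)
  rw [mean_ratio, mean_w]
  exact sub_le_sub_right second_moment _

end MarginalRatio

theorem smc_backward_kernel_optimality_general
    {E : Type*} [MeasurableSpace E] (ν : Measure E) [SigmaFinite ν]
    (n : ℕ) (q1 : E → ℝ) (K : ℕ → E → E → ℝ) (f : E → ℝ)
    (hq1m : Measurable q1) (hKm : ∀ j, Measurable (Function.uncurry (K j)))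
    (hfm : Measurable f) (hf0 : ∀ x, 0 ≤ f x)
    -- the marginal importance densities q_j
    (qm : ℕ → E → ℝ) (hqm0 : qm 0 = q1)
    (hqmrec : ∀ j y, qm (j + 1) y = ∫ x, qm j x * K j x y ∂ν)
    (hqmpos : ∀ j x, 0 < qm j x) (hKpos : ∀ j x y, 0 < K j x y)
    -- the path importance density
    (qpath : (Fin (n + 1) → E) → ℝ)
    (hqpath : qpath = fun x =>
      q1 (x 0) * ∏ j : Fin n, K j (x j.castSucc) (x j.succ))
    -- the optimal backward kernels and the induced path weight
    (Lopt : ℕ → E → E → ℝ)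
    (hLopt : Lopt = fun s y x => qm s x * K s x y / qm (s + 1) y)
    (wopt : (Fin (n + 1) → E) → ℝ)
    (hwopt : wopt = fun x =>
      f (x (Fin.last n)) * (∏ s : Fin n, Lopt s (x s.succ) (x s.castSucc)) /
        qpath x) :
    (∀ x : Fin (n + 1) → E,
        wopt x = f (x (Fin.last n)) / qm n (x (Fin.last n))) ∧
    (∀ L : ℕ → E → E → ℝ, (∀ j, Measurable (Function.uncurry (L j))) →
      (∀ s y x, 0 ≤ L s y x) → (∀ s y, ∫ x, L s y x ∂ν = 1) →
      ∀ wL : (Fin (n + 1) → E) → ℝ,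
        wL = (fun x => f (x (Fin.last n)) *
          (∏ s : Fin n, L s (x s.succ) (x s.castSucc)) / qpath x) →
        Integrable (fun x => (wL x) ^ 2 * qpath x)
          (Measure.pi fun _ : Fin (n + 1) => ν) →
        (∫ x, (wopt x) ^ 2 * qpath x ∂(Measure.pi fun _ : Fin (n + 1) => ν)) -
            (∫ x, wopt x * qpath x ∂(Measure.pi fun _ : Fin (n + 1) => ν)) ^ 2 ≤
          (∫ x, (wL x) ^ 2 * qpath x ∂(Measure.pi fun _ : Fin (n + 1) => ν)) -
            (∫ x, wL x * qpath x ∂(Measure.pi fun _ : Fin (n + 1) => ν)) ^ 2) := by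
  obtain rfl : qpath = pathDensity q1 K := hqpath
  subst hqm0 hLopt
  have hq_pos : ∀ x : Fin (n + 1) → E, 0 < pathDensity (qm 0) K x :=
    pathDensity_pos (hqmpos 0) hKpos
  have hopt : ∀ x, wopt x = f (x (Fin.last n)) / qm n (x (Fin.last n)) := fun x => by
    rw [hwopt]
    exact optimal_backward_weight_eq qm K (fun j a => (hqmpos j a).ne')
      (fun j a b => (hKpos j a b).ne') _ x
  refine ⟨hopt, fun L hLm hL0 hLint wL hwL hint => ?_⟩
  set Lrev : ℕ → E → E → ℝ := fun j a b => L j b a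
  obtain rfl : wL = fun x => f (x (Fin.last n)) * pathDensity (fun _ => 1) Lrev x
      / pathDensity (qm 0) K x := by
    simp only [hwL, pathDensity, one_mul, Lrev]
  have hq_meas := measurable_pathDensity (n := n) hq1m hKm
  have hLrev_meas := measurable_pathDensity (n := n) (init := fun _ => (1 : ℝ)) (P := Lrev)
    measurable_const fun j => (hLm j).comp measurable_swap
  have hLrev_nonneg := pathDensity_nonneg (n := n) (fun _ => zero_le_one) fun j a b => hL0 j b a
  have hmarg_q := lintegral_ofReal_pathDensity_snoc ν hq1m hKm (fun j a => (hqmpos j a).le)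
    (fun j a b => (hKpos j a b).le)
    (fun j b => .of_integral_ne_zero (hqmrec j b ▸ (hqmpos _ _).ne')) hqmrec n
  rw [funext hopt]
  refine variance_marginal_ratio_le ν hq_meas
    (((hfm.comp (measurable_pi_apply _)).mul hLrev_meas).div hq_meas) hfm
    (measurable_of_integral_recursion ν hq1m hKm hqmrec n) (fun x => (hq_pos x).le)
    (fun x => div_nonneg (mul_nonneg (hf0 _) (hLrev_nonneg x)) (hq_pos x).le)
    hf0 (hqmpos n) hmarg_q (fun y => ?_) hint
  simp only [div_mul_cancel₀ _ (hq_pos _).ne', Fin.snoc_last]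
  rw [lintegral_const_mul_snoc ν hLrev_meas
      (lintegral_ofReal_backward_pathDensity_snoc ν hLm hL0 hLint n) (hf0 y), mul_one]

/-- Optimality of the backward kernels in SMC samplers: with path importance
density `q̃(x₁:ₜ) = q₁(x₁)∏ⱼ Kⱼ(xⱼ₋₁,xⱼ)`, marginals `qⱼ`, and backward kernels
`Lˢᵒᵖᵗ_s(x_{s+1},x_s) = q_s(x_s)K_{s+1}(x_s,x_{s+1})/q_{s+1}(x_{s+1})`, the
resulting path weight equals `f_t(x_t)/q_t(x_t)`, and its variance under `q̃`
is no larger than that of the weight obtained from any other (normalized)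
choice of backward kernels. -/
theorem smc_backward_kernel_optimality
    {E : Type*} [MeasurableSpace E] (ν : Measure E) [SigmaFinite ν]
    (n : ℕ) (q1 : E → ℝ) (K : ℕ → E → E → ℝ) (f : E → ℝ)
    (hq1m : Measurable q1) (hKm : ∀ j, Measurable (Function.uncurry (K j)))
    (hfm : Measurable f) (hf0 : ∀ x, 0 ≤ f x)
    (hq1int : ∫ x, q1 x ∂ν = 1) (hKint : ∀ j x, ∫ y, K j x y ∂ν = 1)
    -- the marginal importance densities q_j
    (qm : ℕ → E → ℝ) (hqm0 : qm 0 = q1)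
    (hqmrec : ∀ j y, qm (j + 1) y = ∫ x, qm j x * K j x y ∂ν)
    (hqmpos : ∀ j x, 0 < qm j x) (hKpos : ∀ j x y, 0 < K j x y)
    -- the path importance density
    (qpath : (Fin (n + 1) → E) → ℝ)
    (hqpath : qpath = fun x =>
      q1 (x 0) * ∏ j : Fin n, K j (x j.castSucc) (x j.succ))
    -- the optimal backward kernels and the induced path weight
    (Lopt : ℕ → E → E → ℝ)
    (hLopt : Lopt = fun s y x => qm s x * K s x y / qm (s + 1) y)
    (wopt : (Fin (n + 1) → E) → ℝ)
    (hwopt : wopt = fun x =>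
      f (x (Fin.last n)) * (∏ s : Fin n, Lopt s (x s.succ) (x s.castSucc)) /
        qpath x) :
    (∀ x : Fin (n + 1) → E,
        wopt x = f (x (Fin.last n)) / qm n (x (Fin.last n))) ∧
    (∀ L : ℕ → E → E → ℝ, (∀ j, Measurable (Function.uncurry (L j))) →
      (∀ s y x, 0 ≤ L s y x) → (∀ s y, ∫ x, L s y x ∂ν = 1) →
      ∀ wL : (Fin (n + 1) → E) → ℝ,
        wL = (fun x => f (x (Fin.last n)) *
          (∏ s : Fin n, L s (x s.succ) (x s.castSucc)) / qpath x) →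
        Integrable (fun x => (wL x) ^ 2 * qpath x)
          (Measure.pi fun _ : Fin (n + 1) => ν) →
        (∫ x, (wopt x) ^ 2 * qpath x ∂(Measure.pi fun _ : Fin (n + 1) => ν)) -
            (∫ x, wopt x * qpath x ∂(Measure.pi fun _ : Fin (n + 1) => ν)) ^ 2 ≤
          (∫ x, (wL x) ^ 2 * qpath x ∂(Measure.pi fun _ : Fin (n + 1) => ν)) -
            (∫ x, wL x * qpath x ∂(Measure.pi fun _ : Fin (n + 1) => ν)) ^ 2) :=
  smc_backward_kernel_optimality_general ν n q1 K f hq1m hKm hfm hf0 qm hqm0 hqmrec hqmpos hKpos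
    qpath hqpath Lopt hLopt wopt hwopt
end

section
/- Under perfect mixing and reversal backward kernels, the path-IS asymptotic variance factorizes: σ²_{PIS,t} = (∫ π₁²(u₀)/q₀(u₀) du₀) · ∏_{k=2}^t (∫ π_k²(u)/π_{k−1}(u) du) · Var_{π_t}(φ(U)); in particular, for truncated targets π_k = π·1_{G_k}/p_k with nested G_k and q₀ = π, this equals (1/p_t)·Var_{π_t}(φ(U)), which is at least Var_{π_t}(φ(U)). -/
open MeasureTheory

/-!
Under perfect mixing the squared path weight `π̃²/q̃ · (φ - m)²` is a product of functions of
one coordinate each, so by Fubini `σ²` is a product of one-dimensional integrals. For truncated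
targets `π_k = π 1_{G_k} / p_k` with nested `G_k`, the factor `∫ π_k² / π_{k-1}` equals
`p_{k-1} / p_k`, the product telescopes to `1 / p_t`, and `p_t ≤ ∫ π = 1` gives the bound.
-/

theorem Finset.prod_range_div'_of_ne_zero {K : Type*} [Field K] (f : ℕ → K)
    (hf : ∀ k, f k ≠ 0) (n : ℕ) :
    ∏ k ∈ Finset.range n, f k / f (k + 1) = f 0 / f n := by
  induction n with
  | zero => simp [hf 0]
  | succ n ih =>
    rw [Finset.prod_range_succ, ih]
    field_simp [hf n, hf (n + 1)]

theorem indicator_sq_mul_div_eq {E : Type*} {s : Set E} {f g w : E → ℝ} {c : ℝ}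
    (hg : ∀ u ∈ s, g u = f u / c) (c' : ℝ) (u : E) :
    (s.indicator f u / c') ^ 2 * w u / g u =
      s.indicator (fun u => w u * f u) u * (c / c' ^ 2) := by
  by_cases hu : u ∈ s
  · rw [Set.indicator_of_mem hu, Set.indicator_of_mem hu, hg u hu]
    rcases eq_or_ne (f u) 0 with hf | hf
    · simp [hf]
    rcases eq_or_ne c 0 with hc | hc
    · simp [hc]
    field_simp
  · simp [hu]

theorem integral_indicator_sq_mul_div_eq {E : Type*} [MeasurableSpace E] {ν : Measure E}
    {s : Set E} (hs : MeasurableSet s) {f g w : E → ℝ} {c : ℝ} (hg : ∀ u ∈ s, g u = f u / c)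
    (c' : ℝ) :
    ∫ u, (s.indicator f u / c') ^ 2 * w u / g u ∂ν = (∫ u in s, w u * f u ∂ν) * (c / c' ^ 2) := by
  simp_rw [indicator_sq_mul_div_eq hg c', integral_mul_const, integral_indicator hs]

section PathFactorization

variable {E : Type*} (a : ℕ → E → ℝ) (q₀ ψ : E → ℝ) (n : ℕ)

def pathNum (i : Fin (n + 1)) (u : E) : ℝ :=
  if (i : ℕ) < n then a (i + 2) u ^ 2 else a (n + 1) u ^ 2 * ψ u

def pathDen (i : Fin (n + 1)) (u : E) : ℝ :=
  if (i : ℕ) = 0 then q₀ u else a (i + 1) u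

theorem prod_pathNum (x : Fin (n + 1) → E) :
    ∏ i, pathNum a ψ n i (x i) =
      (a (n + 1) (x (Fin.last n)) * ∏ s : Fin n, a (s + 2) (x s.castSucc)) ^ 2 *
        ψ (x (Fin.last n)) := by
  simp only [pathNum, Fin.prod_univ_castSucc, Fin.val_castSucc, Fin.is_lt, ↓reduceIte,
    Finset.prod_pow, Fin.val_last, lt_self_iff_false]
  ring

theorem prod_pathDen (x : Fin (n + 1) → E) :
    ∏ i, pathDen a q₀ n i (x i) = q₀ (x 0) * ∏ j : Fin n, a (j + 2) (x j.succ) := by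
  simp [pathDen, Fin.prod_univ_succ]

theorem integral_path_weight_eq_prod [MeasurableSpace E] (ν : Measure E) [SigmaFinite ν] :
    ∫ x : Fin (n + 1) → E,
      (a (n + 1) (x (Fin.last n)) * ∏ s : Fin n, a (s + 2) (x s.castSucc)) ^ 2 /
        (q₀ (x 0) * ∏ j : Fin n, a (j + 2) (x j.succ)) * ψ (x (Fin.last n))
        ∂(Measure.pi fun _ => ν) =
      ∏ i, ∫ u, pathNum a ψ n i u / pathDen a q₀ n i u ∂ν := by
  simp_rw [div_mul_eq_mul_div, ← prod_pathNum, ← prod_pathDen, ← Finset.prod_div_distrib]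
  exact integral_fin_nat_prod_eq_prod (μ := fun _ => ν)
    fun i u => pathNum a ψ n i u / pathDen a q₀ n i u

end PathFactorization

section TruncatedPath

variable {E : Type*} {π : E → ℝ} {G : ℕ → Set E} {p : ℕ → ℝ} {n : ℕ}

noncomputable def truncDensity (π : E → ℝ) (G : ℕ → Set E) (p : ℕ → ℝ) (k : ℕ) (u : E) : ℝ :=
  (G k).indicator π u / p k

theorem truncDensity_nonneg (hπ0 : ∀ u, 0 ≤ π u) (hp : ∀ k, 0 < p k) (k : ℕ) (u : E) :
    0 ≤ truncDensity π G p k u :=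
  div_nonneg (Set.indicator_nonneg (fun u _ => hπ0 u) u) (hp k).le

theorem integral_truncDensity_sq_div [MeasurableSpace E] {ν : Measure E} {g : E → ℝ} {k : ℕ}
    (hGm : MeasurableSet (G k)) (hp : p k = ∫ u in G k, π u ∂ν) (hpk : p k ≠ 0) {c : ℝ}
    (hg : ∀ u ∈ G k, g u = π u / c) :
    ∫ u, truncDensity π G p k u ^ 2 / g u ∂ν = c / p k := by
  have h := integral_indicator_sq_mul_div_eq (ν := ν) (w := fun _ => 1) hGm hg (p k)
  simp only [mul_one, one_mul] at h
  unfold truncDensity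
  rw [h, ← hp]
  field_simp

def pathDenScale (p : ℕ → ℝ) (i : ℕ) : ℝ := if i = 0 then 1 else p (i + 1)

theorem pathDenScale_ne_zero (hpne : ∀ k, p k ≠ 0) (i : ℕ) : pathDenScale p i ≠ 0 := by
  unfold pathDenScale
  split_ifs
  exacts [one_ne_zero, hpne _]

theorem pathDen_truncDensity_of_mem (hG : Antitone G) (i : Fin (n + 1)) {k : ℕ}
    (hk : (i : ℕ) + 1 ≤ k) {u : E} (hu : u ∈ G k) :
    pathDen (truncDensity π G p) π n i u = π u / pathDenScale p i := by
  unfold pathDen pathDenScale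
  split_ifs
  · exact (div_one _).symm
  · simp [truncDensity, Set.indicator_of_mem (hG hk hu)]

variable [MeasurableSpace E] {ν : Measure E}

theorem integral_truncated_pathFactor_castSucc (hGm : ∀ k, MeasurableSet (G k))
    (hG : Antitone G) (hp : ∀ k, p k = ∫ u in G k, π u ∂ν) (hpne : ∀ k, p k ≠ 0) (ψ : E → ℝ)
    (s : Fin n) :
    ∫ u, pathNum (truncDensity π G p) ψ n s.castSucc u /
      pathDen (truncDensity π G p) π n s.castSucc u ∂ν = pathDenScale p s / p (s + 2) := by
  simp only [pathNum, Fin.val_castSucc, if_pos s.isLt]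
  exact integral_truncDensity_sq_div (hGm _) (hp _) (hpne _) fun u hu =>
    pathDen_truncDensity_of_mem hG _ (by simp) hu

theorem integral_truncated_pathFactor_last (hGm : ∀ k, MeasurableSet (G k)) (hG : Antitone G)
    (hpne : ∀ k, p k ≠ 0) (ψ : E → ℝ) :
    ∫ u, pathNum (truncDensity π G p) ψ n (Fin.last n) u /
      pathDen (truncDensity π G p) π n (Fin.last n) u ∂ν =
      (∫ u, ψ u * truncDensity π G p (n + 1) u ∂ν) * (pathDenScale p n / p (n + 1)) := by
  have hweight : ∫ u, ψ u * truncDensity π G p (n + 1) u ∂ν =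
      (∫ u in G (n + 1), ψ u * π u ∂ν) / p (n + 1) := by
    simp_rw [truncDensity, ← mul_div_assoc, ← Set.indicator_mul_right, integral_div,
      integral_indicator (hGm _)]
  simp only [pathNum, Fin.val_last, lt_irrefl, if_false]
  refine (integral_indicator_sq_mul_div_eq (hGm (n + 1))
    (fun u hu => pathDen_truncDensity_of_mem hG (Fin.last n) le_rfl hu) (p (n + 1))).trans ?_
  rw [hweight, Fin.val_last]
  field_simp [hpne (n + 1)]

theorem integral_truncated_path_weight [SigmaFinite ν] (hGm : ∀ k, MeasurableSet (G k))
    (hG : Antitone G) (hp : ∀ k, p k = ∫ u in G k, π u ∂ν) (hpne : ∀ k, p k ≠ 0) (ψ : E → ℝ) :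
    ∫ x : Fin (n + 1) → E,
      (truncDensity π G p (n + 1) (x (Fin.last n)) *
          ∏ s : Fin n, truncDensity π G p (s + 2) (x s.castSucc)) ^ 2 /
        (π (x 0) * ∏ j : Fin n, truncDensity π G p (j + 2) (x j.succ)) * ψ (x (Fin.last n))
        ∂(Measure.pi fun _ => ν) =
      (∫ u, ψ u * truncDensity π G p (n + 1) u ∂ν) / p (n + 1) := by
  have htelescope : ∏ s : Fin n, pathDenScale p s / p (s + 2) = 1 / pathDenScale p n := by
    rw [Fin.prod_univ_eq_prod_range (fun s => pathDenScale p s / p (s + 2))]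
    exact Finset.prod_range_div'_of_ne_zero _ (pathDenScale_ne_zero hpne) n
  rw [integral_path_weight_eq_prod, Fin.prod_univ_castSucc,
    integral_truncated_pathFactor_last hGm hG hpne]
  simp_rw [integral_truncated_pathFactor_castSucc hGm hG hp hpne]
  rw [htelescope]
  field_simp [pathDenScale_ne_zero hpne n]

end TruncatedPath

theorem PIS_asymptotic_variance_factorization_general
    {E : Type*} [MeasurableSpace E] (ν : Measure E) [SigmaFinite ν]
    (π : E → ℝ) (hπ0 : ∀ u, 0 ≤ π u)
    (hπ1 : ∫ u, π u ∂ν = 1)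
    (G : ℕ → Set E) (hGm : ∀ k, MeasurableSet (G k))
    (hnested : ∀ k, G (k + 1) ⊆ G k)
    (p : ℕ → ℝ) (hp : ∀ k, p k = ∫ u in G k, π u ∂ν)
    (hppos : ∀ k, 0 < p k)
    (πk : ℕ → E → ℝ)
    (hπk : πk = fun k u => π u * (G k).indicator 1 u / p k)
    (n : ℕ) (φ : E → ℝ)
    -- the path importance density q̃ (perfect mixing: K_t = π_t)
    (qpath : (Fin (n + 1) → E) → ℝ)
    (hqpath : qpath = fun x =>
      π (x 0) * ∏ j : Fin n, πk (j.val + 2) (x j.succ))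
    -- the extended target π̃ with reversal backward kernels L_s = π_{s+1}(u_s)
    (πpath : (Fin (n + 1) → E) → ℝ)
    (hπpath : πpath = fun x =>
      πk (n + 1) (x (Fin.last n)) * ∏ s : Fin n, πk (s.val + 2) (x s.castSucc))
    (m : ℝ)
    (V : ℝ) (hV : V = ∫ u, (φ u - m) ^ 2 * πk (n + 1) u ∂ν)
    (σ2 : ℝ)
    (hσ2 : σ2 = ∫ x : Fin (n + 1) → E,
      (πpath x) ^ 2 / qpath x * (φ (x (Fin.last n)) - m) ^ 2
        ∂(Measure.pi fun _ : Fin (n + 1) => ν)) :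
    σ2 = (∫ u, (πk 1 u) ^ 2 / π u ∂ν) *
        (∏ k ∈ Finset.range n, ∫ u, (πk (k + 2) u) ^ 2 / πk (k + 1) u ∂ν) * V ∧
    σ2 = (1 / p (n + 1)) * V ∧
    V ≤ σ2 := by
  have hpne : ∀ k, p k ≠ 0 := fun k => (hppos k).ne'
  obtain rfl : πk = truncDensity π G p := by
    ext k u
    by_cases hu : u ∈ G k <;> simp [hπk, truncDensity, hu]
  subst hqpath hπpath
  have hσV : σ2 = V / p (n + 1) := by
    rw [hσ2, hV]
    exact integral_truncated_path_weight hGm (antitone_nat_of_succ_le hnested) hp hpne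
      fun u => (φ u - m) ^ 2
  -- The path never visits `π₁`, so the Fubini factors are `∫ π₂²/π` and `∫ π_{k+2}²/π_{k+1}`
  -- for `k ≥ 1` rather than the factors below; both products telescope to `1 / p (n + 1)`.
  have hproduct : (∫ u, truncDensity π G p 1 u ^ 2 / π u ∂ν) *
      ∏ k ∈ Finset.range n, ∫ u, truncDensity π G p (k + 2) u ^ 2 /
        truncDensity π G p (k + 1) u ∂ν = 1 / p (n + 1) := by
    rw [integral_truncDensity_sq_div (hGm 1) (hp 1) (hpne 1) (c := 1) fun u _ => (div_one _).symm,
      Finset.prod_congr rfl fun k _ => integral_truncDensity_sq_div (hGm _) (hp _) (hpne _)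
        (c := p (k + 1)) fun u hu => by simp [truncDensity, Set.indicator_of_mem (hnested _ hu)],
      Finset.prod_range_div'_of_ne_zero (fun k => p (k + 1)) (fun k => hpne _)]
    rw [zero_add, ← mul_div_assoc, one_div_mul_cancel (hpne 1)]
  have hV0 : 0 ≤ V := hV ▸ integral_nonneg fun u =>
    mul_nonneg (sq_nonneg _) (truncDensity_nonneg hπ0 hppos _ u)
  have hπint : Integrable π ν := by
    by_contra h
    rw [integral_undef h] at hπ1
    exact zero_ne_one hπ1
  have hp_le_one : p (n + 1) ≤ 1 :=
    hp (n + 1) ▸ hπ1 ▸ setIntegral_le_integral hπint (Filter.Eventually.of_forall hπ0)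
  refine ⟨by rw [hproduct, hσV, one_div_mul_eq_div], by rw [hσV, one_div_mul_eq_div], ?_⟩
  exact hσV ▸ le_div_self hV0 (hppos _) hp_le_one

/-- Path-space importance sampling asymptotic variance under perfect mixing and
reversal backward kernels, for the truncated targets `π_k = π·1_{G_k}/p_k`
(nested sets `G_k`, `p_k = ∫_{G_k} π > 0`) and initial proposal `q₀ = π`:
the variance factorizes as
`σ²_{PIS,t} = (∫ π₁²/q₀)·∏_{k=2}^t (∫ π_k²/π_{k−1})·Var_{π_t}(φ)`,
which equals `(1/p_t)·Var_{π_t}(φ)` and is at least `Var_{π_t}(φ)`. -/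
theorem PIS_asymptotic_variance_factorization
    {E : Type*} [MeasurableSpace E] (ν : Measure E) [SigmaFinite ν]
    (π : E → ℝ) (hπm : Measurable π) (hπ0 : ∀ u, 0 ≤ π u)
    (hπ1 : ∫ u, π u ∂ν = 1)
    (G : ℕ → Set E) (hGm : ∀ k, MeasurableSet (G k))
    (hnested : ∀ k, G (k + 1) ⊆ G k)
    (p : ℕ → ℝ) (hp : ∀ k, p k = ∫ u in G k, π u ∂ν)
    (hppos : ∀ k, 0 < p k)
    (πk : ℕ → E → ℝ)
    (hπk : πk = fun k u => π u * (G k).indicator 1 u / p k)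
    (n : ℕ) (φ : E → ℝ) (hφm : Measurable φ)
    (hφ2 : Integrable (fun u => (φ u) ^ 2 * π u) ν)
    -- the path importance density q̃ (perfect mixing: K_t = π_t)
    (qpath : (Fin (n + 1) → E) → ℝ)
    (hqpath : qpath = fun x =>
      π (x 0) * ∏ j : Fin n, πk (j.val + 2) (x j.succ))
    -- the extended target π̃ with reversal backward kernels L_s = π_{s+1}(u_s)
    (πpath : (Fin (n + 1) → E) → ℝ)
    (hπpath : πpath = fun x =>
      πk (n + 1) (x (Fin.last n)) * ∏ s : Fin n, πk (s.val + 2) (x s.castSucc))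
    (m : ℝ) (hm : m = ∫ u, φ u * πk (n + 1) u ∂ν)
    (V : ℝ) (hV : V = ∫ u, (φ u - m) ^ 2 * πk (n + 1) u ∂ν)
    (σ2 : ℝ)
    (hσ2 : σ2 = ∫ x : Fin (n + 1) → E,
      (πpath x) ^ 2 / qpath x * (φ (x (Fin.last n)) - m) ^ 2
        ∂(Measure.pi fun _ : Fin (n + 1) => ν)) :
    σ2 = (∫ u, (πk 1 u) ^ 2 / π u ∂ν) *
        (∏ k ∈ Finset.range n, ∫ u, (πk (k + 2) u) ^ 2 / πk (k + 1) u ∂ν) * V ∧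
    σ2 = (1 / p (n + 1)) * V ∧
    V ≤ σ2 :=
  PIS_asymptotic_variance_factorization_general ν π hπ0 hπ1 G hGm hnested p hp hppos πk hπk n φ
    qpath hqpath πpath hπpath m V hV σ2 hσ2
end
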